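/- (Entropy-regularized multi-agent actor gradient; the exact on-policy part of the SAC-based joint gradient, Proposition 3.) In the multi-agent setup, fix agent i, ψ₀ⁱ ∈ Ψⁱ, a real constant α, and fixed real-valued functions Q(o,a) and B(o, a^{∖i}) independent of ψⁱ (with B independent of agent i's action). Define J(ψⁱ) = ∑_{s,o,a} d(s)E(o|s)(∏_j πʲ(aʲ|oʲ))·[Q(o,a) − α·log πⁱ_{ψⁱ}(aⁱ|oⁱ) − B(o,a^{∖i})]. Then the Fréchet derivative of J at ψ₀ⁱ equals ∑_{s,o,a} d(s)E(o|s)(∏_j πʲ(aʲ|oʲ))·D_{ψⁱ}(log πⁱ_{ψⁱ}(aⁱ|oⁱ))|_{ψ₀ⁱ}·[Q(o,a) − α·log πⁱ_{ψ₀ⁱ}(aⁱ|oⁱ) − B(o,a^{∖i})]; in particular the extra term −α·∑_{aⁱ} D_{ψⁱ}πⁱ(aⁱ|oⁱ) vanishes because ∑_{aⁱ} πⁱ_{ψⁱ}(aⁱ|oⁱ) = 1 for all ψⁱ. -/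

import Mathlib

open Finset

/-!
Only agent `i`'s factor of the joint policy depends on `ψⁱ`, so `J` is a weighted sum of the
functions `p ↦ p · (q − α log p)` with `p = πⁱ_{ψⁱ}(aⁱ|oⁱ)`, whose derivative is
`p (q − α log p) · D log p − α · D p`. The first part is the claimed gradient. The weight of
the second part does not depend on `aⁱ`, so summing it over `aⁱ` produces `∑_{aⁱ} D πⁱ(aⁱ|oⁱ)`,
the derivative of the constant `∑_{aⁱ} πⁱ(aⁱ|oⁱ) = 1`, which vanishes.
-/

theorem Fintype.prod_apply_update_eq_mul_prod_subtype_ne {ι : Type*} [Fintype ι] [DecidableEq ι]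
    {β : ι → Type*} {M : Type*} [CommMonoid M] (f : ∀ j, β j → M) (g : ∀ j, β j) (i : ι)
    (x : β i) :
    ∏ j, f j (Function.update g i x j) = f i x * ∏ j : {j // j ≠ i}, f j (g j) := by
  rw [Fintype.prod_eq_mul_prod_subtype_ne _ i, Function.update_self]
  congr 1
  exact Fintype.prod_congr _ _ fun j => by rw [Function.update_of_ne j.2]

theorem Fintype.sum_smul_apply_eq_zero {ι : Type*} [Fintype ι] [DecidableEq ι] {A : ι → Type*}
    [∀ j, Fintype (A j)] {R M : Type*} [Semiring R] [AddCommMonoid M] [Module R M]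
    (i : ι) (w : (∀ j : {j // j ≠ i}, A j) → R) {u : A i → M} (hu : ∑ b, u b = 0) :
    ∑ a : ∀ j, A j, w (fun j => a j) • u (a i) = 0 := by
  have hrestrict : ∀ b g, (fun j : {j // j ≠ i} => (Equiv.piSplitAt i A).symm (b, g) j) = g :=
    fun b g => funext fun j => by simp [j.2]
  have hat : ∀ b g, (Equiv.piSplitAt i A).symm (b, g) i = b := fun b g => by simp
  rw [← (Equiv.piSplitAt i A).symm.sum_comp, Fintype.sum_prod_type, sum_comm]
  simp only [hrestrict, hat, ← smul_sum, hu, smul_zero, sum_const_zero]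

theorem sum_fderiv_eq_zero_of_sum_eq_const {E F κ : Type*} [NormedAddCommGroup E]
    [NormedSpace ℝ E] [NormedAddCommGroup F] [NormedSpace ℝ F] [Fintype κ] {f : κ → E → F}
    {x₀ : E} (hf : ∀ k, DifferentiableAt ℝ (f k) x₀) (c : F) (hsum : ∀ x, ∑ k, f k x = c) :
    ∑ k, fderiv ℝ (f k) x₀ = 0 := by
  rw [← fderiv_fun_sum fun k _ => hf k, funext hsum, fderiv_const_apply]

theorem hasFDerivAt_mul_sub_mul_log {E : Type*} [NormedAddCommGroup E] [NormedSpace ℝ E]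
    {p : E → ℝ} {x₀ : E} (hp : DifferentiableAt ℝ p x₀) (hp₀ : p x₀ ≠ 0) (q α : ℝ) :
    HasFDerivAt (fun x => p x * (q - α * Real.log (p x)))
      ((p x₀ * (q - α * Real.log (p x₀))) • fderiv ℝ (fun x => Real.log (p x)) x₀
        - α • fderiv ℝ p x₀) x₀ := by
  have hlog := hp.hasFDerivAt.log hp₀
  rw [hlog.fderiv]
  refine (hp.hasFDerivAt.fun_mul
    ((hasFDerivAt_const q x₀).fun_sub (hlog.const_mul α))).congr_fderiv ?_
  ext v
  simp only [zero_sub, smul_neg, add_apply, neg_apply, smul_apply, smul_eq_mul, sub_apply]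
  field_simp
  ring

theorem hasFDerivAt_sum_mul_entropy_regularized {ι E : Type*} [Fintype ι] [DecidableEq ι]
    {A : ι → Type*} [∀ j, Fintype (A j)] [NormedAddCommGroup E] [NormedSpace ℝ E] (i : ι)
    {p : E → A i → ℝ} {x₀ : E} (hp : ∀ b, DifferentiableAt ℝ (fun x => p x b) x₀)
    (hp₀ : ∀ b, p x₀ b ≠ 0) (c : ℝ) (hsum : ∀ x, ∑ b, p x b = c)
    (w : (∀ j : {j // j ≠ i}, A j) → ℝ) (R : (∀ j, A j) → ℝ) (α : ℝ) :
    HasFDerivAt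
      (fun x => ∑ a : ∀ j, A j, w (fun j => a j) * (p x (a i) * (R a - α * Real.log (p x (a i)))))
      (∑ a : ∀ j, A j, (w (fun j => a j) * (p x₀ (a i) * (R a - α * Real.log (p x₀ (a i))))) •
        fderiv ℝ (fun x => Real.log (p x (a i))) x₀) x₀ := by
  have hmarginal :
      ∑ a : ∀ j, A j, (α * w fun j => a j) • fderiv ℝ (fun x => p x (a i)) x₀ = 0 :=
    Fintype.sum_smul_apply_eq_zero i (fun g => α * w g)
      (sum_fderiv_eq_zero_of_sum_eq_const hp c hsum)
  refine (HasFDerivAt.fun_sum fun a _ =>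
    (hasFDerivAt_mul_sub_mul_log (hp (a i)) (hp₀ (a i)) (R a) α).const_mul
      (w fun j => a j)).congr_fderiv ?_
  simp only [smul_sub, smul_smul, sum_sub_distrib, mul_comm _ α, hmarginal, sub_zero]

theorem sac_entropy_regularized_actor_gradient_general
    {ι : Type*} [Fintype ι] [DecidableEq ι]
    {S : Type*} [Fintype S]
    {O : ι → Type*} [∀ j, Fintype (O j)]
    {A : ι → Type*} [∀ j, Fintype (A j)]
    {Ψ : ι → Type*} [∀ j, NormedAddCommGroup (Ψ j)] [∀ j, NormedSpace ℝ (Ψ j)]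
    (π : ∀ j, Ψ j → O j → A j → ℝ)
    (hpos : ∀ (j : ι) (ψj : Ψ j) (oj : O j) (aj : A j), 0 < π j ψj oj aj)
    (hdiff : ∀ (j : ι) (ψj : Ψ j) (oj : O j) (aj : A j),
      DifferentiableAt ℝ (fun p => π j p oj aj) ψj)
    (hnorm : ∀ (j : ι) (ψj : Ψ j) (oj : O j), ∑ aj : A j, π j ψj oj aj = 1)
    (d : S → ℝ)
    (E : S → (∀ j, O j) → ℝ)
    (i : ι) (ψ : ∀ j, Ψ j)
    (α : ℝ)
    (Q : (∀ j, O j) → (∀ j, A j) → ℝ)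
    (B : (∀ j, O j) → (∀ j, A j) → ℝ) :
    fderiv ℝ (fun ψi : Ψ i => ∑ s : S, ∑ o : (∀ j, O j), ∑ a : (∀ j, A j),
        d s * E s o * (∏ j, π j (Function.update ψ i ψi j) (o j) (a j)) *
          (Q o a - α * Real.log (π i ψi (o i) (a i)) - B o a)) (ψ i)
      = ∑ s : S, ∑ o : (∀ j, O j), ∑ a : (∀ j, A j),
          (d s * E s o * (∏ j, π j (ψ j) (o j) (a j)) *
            (Q o a - α * Real.log (π i (ψ i) (o i) (a i)) - B o a)) •
            fderiv ℝ (fun ψi : Ψ i => Real.log (π i ψi (o i) (a i))) (ψ i) := by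
  set C : S → (∀ j, O j) → (∀ j : {j // j ≠ i}, A j) → ℝ :=
    fun s o g => d s * E s o * ∏ j : {j // j ≠ i}, π j (ψ j) (o j) (g j)
  have hJ : (fun ψi : Ψ i => ∑ s : S, ∑ o : (∀ j, O j), ∑ a : (∀ j, A j),
        d s * E s o * (∏ j, π j (Function.update ψ i ψi j) (o j) (a j)) *
          (Q o a - α * Real.log (π i ψi (o i) (a i)) - B o a))
      = fun ψi => ∑ s : S, ∑ o : (∀ j, O j), ∑ a : (∀ j, A j), C s o (fun j => a j) *
          (π i ψi (o i) (a i) * (Q o a - B o a - α * Real.log (π i ψi (o i) (a i)))) := by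
    refine funext fun x => sum_congr rfl fun s _ => sum_congr rfl fun o _ =>
      sum_congr rfl fun a _ => ?_
    rw [Fintype.prod_apply_update_eq_mul_prod_subtype_ne (fun j p => π j p (o j) (a j))]
    ring
  rw [hJ, (HasFDerivAt.fun_sum fun s _ => .fun_sum fun o _ =>
    hasFDerivAt_sum_mul_entropy_regularized i (p := fun x b => π i x (o i) b)
      (fun b => hdiff i (ψ i) (o i) b) (fun b => (hpos i (ψ i) (o i) b).ne') 1
      (fun x => hnorm i x (o i)) (C s o) (fun a => Q o a - B o a) α).fderiv]
  refine sum_congr rfl fun s _ => sum_congr rfl fun o _ => sum_congr rfl fun a _ => ?_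
  rw [Fintype.prod_eq_mul_prod_subtype_ne (fun j => π j (ψ j) (o j) (a j)) i]
  congr 1
  ring

/-- Entropy-regularized multi-agent actor gradient (exact on-policy part of the
SAC-based joint gradient, Proposition 3): with `Q` and `B` fixed (`B` independent of
agent `i`'s action), the Fréchet derivative at `ψ i` of
`J(ψⁱ) = ∑_{s,o,a} d(s)E(o|s)(∏ j πʲ(aʲ|oʲ))·[Q − α·log πⁱ_{ψⁱ}(aⁱ|oⁱ) − B]` equals
`∑_{s,o,a} d(s)E(o|s)(∏ j πʲ(aʲ|oʲ))·[Q − α·log πⁱ_{ψ i}(aⁱ|oⁱ) − B] • D(log πⁱ)|_{ψ i}`. -/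
theorem sac_entropy_regularized_actor_gradient
    {ι : Type*} [Fintype ι] [DecidableEq ι]
    {S : Type*} [Fintype S]
    {O : ι → Type*} [∀ j, Fintype (O j)]
    {A : ι → Type*} [∀ j, Fintype (A j)]
    {Ψ : ι → Type*} [∀ j, NormedAddCommGroup (Ψ j)] [∀ j, NormedSpace ℝ (Ψ j)]
    (π : ∀ j, Ψ j → O j → A j → ℝ)
    (hpos : ∀ (j : ι) (ψj : Ψ j) (oj : O j) (aj : A j), 0 < π j ψj oj aj)
    (hdiff : ∀ (j : ι) (ψj : Ψ j) (oj : O j) (aj : A j),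
      DifferentiableAt ℝ (fun p => π j p oj aj) ψj)
    (hnorm : ∀ (j : ι) (ψj : Ψ j) (oj : O j), ∑ aj : A j, π j ψj oj aj = 1)
    (d : S → ℝ) (hd : ∀ s, 0 ≤ d s)
    (E : S → (∀ j, O j) → ℝ) (hE : ∀ s o, 0 ≤ E s o)
    (i : ι) (ψ : ∀ j, Ψ j)
    (α : ℝ)
    (Q : (∀ j, O j) → (∀ j, A j) → ℝ)
    (B : (∀ j, O j) → (∀ j, A j) → ℝ)
    (hB : ∀ (o : ∀ j, O j) (a a' : ∀ j, A j),
      (∀ j, j ≠ i → a j = a' j) → B o a = B o a') :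
    fderiv ℝ (fun ψi : Ψ i => ∑ s : S, ∑ o : (∀ j, O j), ∑ a : (∀ j, A j),
        d s * E s o * (∏ j, π j (Function.update ψ i ψi j) (o j) (a j)) *
          (Q o a - α * Real.log (π i ψi (o i) (a i)) - B o a)) (ψ i)
      = ∑ s : S, ∑ o : (∀ j, O j), ∑ a : (∀ j, A j),
          (d s * E s o * (∏ j, π j (ψ j) (o j) (a j)) *
            (Q o a - α * Real.log (π i (ψ i) (o i) (a i)) - B o a)) •
            fderiv ℝ (fun ψi : Ψ i => Real.log (π i ψi (o i) (a i))) (ψ i) :=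
  sac_entropy_regularized_actor_gradient_general π hpos hdiff hnorm d E i ψ α Q B
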